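/- arXiv:2211.10296 — 7 statements merged into one kernel-verified Lean document; each statement's English description precedes it below -/
import Mathlib

section
/- Let 1 < a ≤ 2, -1 < b < 0, a + b > 1. Let β = (a + √(a²+4b))/2, Y_x = -1/(a+b-1), A = (Y_x(1-β), 0) and X_x = 1/(1+a-b), α = (a - √(a²+4b))/2, L = (X_x(1+α), 0). Then L_x - A_x = a(1-β)/((a+b-1)(β+1)), and in particular L_x < A_x. -/
/-- Under (C1), L_x - A_x = a(1-β)/((a+b-1)(β+1)) and in particular L_x < A_x. -/
theorem Lx_lt_Ax (a b : ℝ) (ha1 : 1 < a) (ha2 : a ≤ 2)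
    (hb1 : -1 < b) (hb2 : b < 0) (hab : 1 < a + b)
    (α β Yx Xx Ax Lx : ℝ)
    (hα : α = (a - Real.sqrt (a ^ 2 + 4 * b)) / 2)
    (hβ : β = (a + Real.sqrt (a ^ 2 + 4 * b)) / 2)
    (hYx : Yx = -1 / (a + b - 1)) (hXx : Xx = 1 / (1 + a - b))
    (hAx : Ax = Yx * (1 - β)) (hLx : Lx = Xx * (1 + α)) :
    Lx - Ax = a * (1 - β) / ((a + b - 1) * (β + 1)) ∧ Lx < Ax := by
  subst hα hβ hYx hXx hAx hLx
  set s := Real.sqrt (a ^ 2 + 4 * b) with hs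
  have hs0 : 0 ≤ s := Real.sqrt_nonneg _
  have hs2 : s ^ 2 = a ^ 2 + 4 * b := Real.sq_sqrt (by nlinarith)
  have hsa : s < a := by nlinarith
  have hsg : 2 - a < s := by nlinarith
  have h1 : (0:ℝ) < a + b - 1 := by linarith
  have h3 : (0:ℝ) < (a + s) / 2 + 1 := by linarith
  have h4 : (0:ℝ) < 1 + (a - s) / 2 := by linarith
  have hβ1 : 1 < (a + s) / 2 := by linarith
  have heq : 1 / (1 + a - b) * (1 + (a - s) / 2) -
      -1 / (a + b - 1) * (1 - (a + s) / 2) =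
      a * (1 - (a + s) / 2) / ((a + b - 1) * ((a + s) / 2 + 1)) := by
    have hfac : 1 + a - b = (1 + (a - s) / 2) * (1 + (a + s) / 2) := by
      linear_combination hs2 / 4
    have key : ((a + s) / 2) ^ 2 = a * ((a + s) / 2) + b := by
      linear_combination hs2 / 4
    rw [hfac, div_mul_eq_mul_div, mul_comm, mul_div_mul_left _ _ (ne_of_gt h4)]
    have step : 1 / (1 + (a + s) / 2) - -1 / (a + b - 1) * (1 - (a + s) / 2) =
        (b + a * ((a + s) / 2) - ((a + s) / 2) ^ 2 + a * (1 - (a + s) / 2)) /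
          ((a + b - 1) * ((a + s) / 2 + 1)) := by
      field_simp
      ring
    rw [step, key]
    ring_nf
  refine ⟨heq, ?_⟩
  rw [← sub_neg, heq]
  apply div_neg_of_neg_of_pos
  · nlinarith
  · positivity
end

section
/- Let (a,r) satisfy 0 < r < 2 and (r+2)/2 < a ≤ 2, and set b = (r² - 2ra)/4. With A_x = -（1-β)/(a+b-1) where β = (a+√(a²+4b))/2, define f(M)_x = 1 + b·A_x²/((a+1)A_x - 1) and L_x = 2/(2+2a-r). Then f(M)_x - L_x = 4a(1-r)(2a-r)/((2-r)(2a-r+2)(2a+r)); in particular f(M)_x > L_x whenever additionally 0 < r < 1. -/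
namespace Lozi

variable {a r : ℝ}

/-- The substitution `b = (r² - 2ra)/4` makes the discriminant `a² + 4b` the perfect square
`(a - r)²`, so the unstable eigenvalue `β` of the fixed point is rational in `a, r`. -/
theorem eigenvalue_eq (hra : r ≤ a) :
    (a + √(a ^ 2 + 4 * ((r ^ 2 - 2 * r * a) / 4))) / 2 = a - r / 2 := by
  have hsq : a ^ 2 + 4 * ((r ^ 2 - 2 * r * a) / 4) = (a - r) ^ 2 := by ring
  rw [hsq, Real.sqrt_sq (sub_nonneg.mpr hra)]
  ring

theorem Ax_eq (hr2 : r < 2) (hra : r + 2 < 2 * a) :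
    -(1 - (a - r / 2)) / (a + (r ^ 2 - 2 * r * a) / 4 - 1) = 2 / (2 - r) := by
  have hden : a + (r ^ 2 - 2 * r * a) / 4 - 1 = (2 - r) * (2 * a - r - 2) / 4 := by ring
  have h2r : 2 - r ≠ 0 := by linarith
  have h2ar : 2 * a - r - 2 ≠ 0 := by linarith
  rw [hden, div_eq_div_iff (by positivity) h2r]
  ring

theorem fMx_eq (hr2 : r < 2) (hpos : 2 * a + r ≠ 0) :
    1 + (r ^ 2 - 2 * r * a) / 4 * (2 / (2 - r)) ^ 2 / ((a + 1) * (2 / (2 - r)) - 1) =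
      1 - (2 * a - r) * r / ((2 * a + r) * (2 - r)) := by
  have h2r : 2 - r ≠ 0 := by linarith
  have hden : (a + 1) * (2 / (2 - r)) - 1 = (2 * a + r) / (2 - r) := by
    field_simp
    ring
  rw [hden]
  field_simp
  ring

theorem fMx_sub_Lx_eq (hr2 : r < 2) (h₁ : 2 * a + r ≠ 0) (h₂ : 2 * a - r + 2 ≠ 0) :
    1 - (2 * a - r) * r / ((2 * a + r) * (2 - r)) - 2 / (2 + 2 * a - r) =
      4 * a * (1 - r) * (2 * a - r) / ((2 - r) * (2 * a - r + 2) * (2 * a + r)) := by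
  have h2r : 2 - r ≠ 0 := by linarith
  rw [show 2 + 2 * a - r = 2 * a - r + 2 by ring]
  field_simp
  ring

end Lozi

open Lozi in
theorem fMx_sub_Lx_general (a r : ℝ) (hr0 : 0 < r) (hr2 : r < 2)
    (ha1 : (r + 2) / 2 < a)
    (b β Ax fMx Lx : ℝ)
    (hb : b = (r ^ 2 - 2 * r * a) / 4)
    (hβ : β = (a + Real.sqrt (a ^ 2 + 4 * b)) / 2)
    (hAx : Ax = -(1 - β) / (a + b - 1))
    (hfMx : fMx = 1 + b * Ax ^ 2 / ((a + 1) * Ax - 1))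
    (hLx : Lx = 2 / (2 + 2 * a - r)) :
    fMx - Lx = 4 * a * (1 - r) * (2 * a - r) /
      ((2 - r) * (2 * a - r + 2) * (2 * a + r)) ∧
    (r < 1 → fMx > Lx) := by
  have hra : r + 2 < 2 * a := by linarith
  subst hb hβ hAx hfMx hLx
  rw [eigenvalue_eq (by linarith), Ax_eq hr2 hra, fMx_eq hr2 (by linarith),
    fMx_sub_Lx_eq hr2 (by linarith) (by linarith)]
  refine ⟨rfl, fun hr1 => ?_⟩
  rw [gt_iff_lt, ← sub_pos, fMx_sub_Lx_eq hr2 (by linarith) (by linarith)]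
  have : 0 < 1 - r := by linarith
  have : 0 < 2 - r := by linarith
  have : 0 < a := by linarith
  have : 0 < 2 * a - r := by linarith
  have : 0 < 2 * a - r + 2 := by linarith
  have : 0 < 2 * a + r := by linarith
  positivity

/-- With the substitution b = (r²-2ra)/4 under (C1_{a,r}),
f(M)_x - L_x = 4a(1-r)(2a-r)/((2-r)(2a-r+2)(2a+r));
in particular f(M)_x > L_x whenever additionally 0 < r < 1. -/
theorem fMx_sub_Lx (a r : ℝ) (hr0 : 0 < r) (hr2 : r < 2)
    (ha1 : (r + 2) / 2 < a) (ha2 : a ≤ 2)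
    (b β Ax fMx Lx : ℝ)
    (hb : b = (r ^ 2 - 2 * r * a) / 4)
    (hβ : β = (a + Real.sqrt (a ^ 2 + 4 * b)) / 2)
    (hAx : Ax = -(1 - β) / (a + b - 1))
    (hfMx : fMx = 1 + b * Ax ^ 2 / ((a + 1) * Ax - 1))
    (hLx : Lx = 2 / (2 + 2 * a - r)) :
    fMx - Lx = 4 * a * (1 - r) * (2 * a - r) /
      ((2 - r) * (2 * a - r + 2) * (2 * a + r)) ∧
    (r < 1 → fMx > Lx) :=
  fMx_sub_Lx_general a r hr0 hr2 ha1 b β Ax fMx Lx hb hβ hAx hfMx hLx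
end

section
/- Let 1 < a < 2 and max{1-a, (1-2a)/4, (3a² - 8a + √(9a⁴ - 16a³))/8} < b < 0 (condition C3). Then the point B = f(A) lies strictly above the line through Y = (-1/(a+b-1), -b/(a+b-1)) with direction (α, b), where α = (a-√(a²+4b))/2; i.e., (B_y - Y_y)/β + B_x - Y_x > 0 with β = (a+√(a²+4b))/2. -/
/-- The Lozi map. -/
noncomputable def lozi (a b : ℝ) : ℝ × ℝ → ℝ × ℝ :=
  fun p => (1 + p.2 - a * |p.1|, b * p.1)

/-- Under condition (C3), the point B = f(A) lies strictly above the line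
through Y in the stable direction (α, b): (B_y - Y_y)/β + B_x - Y_x > 0. -/
theorem B_above_stable_line_of_Y (a b : ℝ) (ha1 : 1 < a) (ha2 : a < 2)
    (hb : max (max (1 - a) ((1 - 2 * a) / 4))
      ((3 * a ^ 2 - 8 * a + Real.sqrt (9 * a ^ 4 - 16 * a ^ 3)) / 8) < b)
    (hb0 : b < 0)
    (β Yx Yy : ℝ)
    (hβ : β = (a + Real.sqrt (a ^ 2 + 4 * b)) / 2)
    (hYx : Yx = -1 / (a + b - 1)) (hYy : Yy = -b / (a + b - 1)) :
    ((lozi a b (Yx * (1 - β), 0)).2 - Yy) / β +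
      (lozi a b (Yx * (1 - β), 0)).1 - Yx > 0 := by
  have hbm1 : 1 - a < b :=
    lt_of_le_of_lt (le_trans (le_max_left _ _) (le_max_left _ _)) hb
  have hbm3 : (3 * a ^ 2 - 8 * a + Real.sqrt (9 * a ^ 4 - 16 * a ^ 3)) / 8 < b :=
    lt_of_le_of_lt (le_max_right _ _) hb
  set t := Real.sqrt (9 * a ^ 4 - 16 * a ^ 3) with htdef
  have ht0 : 0 ≤ t := Real.sqrt_nonneg _
  have hd : 0 < a + b - 1 := by linarith
  have hs0 : 0 ≤ a ^ 2 + 4 * b := by nlinarith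
  set s := Real.sqrt (a ^ 2 + 4 * b) with hsdef
  have hs2 : s ^ 2 = a ^ 2 + 4 * b := Real.sq_sqrt hs0
  have hsnn : 0 ≤ s := Real.sqrt_nonneg _
  have hsgt : 2 - a < s := by nlinarith
  have hβ1 : 1 < β := by rw [hβ]; linarith
  have hA : 0 < Yx * (1 - β) := by
    have h1 : Yx < 0 := by
      rw [hYx]; exact div_neg_of_neg_of_pos (by norm_num) hd
    nlinarith
  have hQ : 0 < 16 * b ^ 2 + (32 * a - 12 * a ^ 2) * b + 16 * a ^ 2 - 8 * a ^ 3 := by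
    have h8 : t < 8 * b + 8 * a - 3 * a ^ 2 := by linarith
    by_cases hc : 0 ≤ 9 * a ^ 4 - 16 * a ^ 3
    · have ht2 : t ^ 2 = 9 * a ^ 4 - 16 * a ^ 3 := Real.sq_sqrt hc
      nlinarith [mul_pos (sub_pos.mpr h8) (by linarith : (0:ℝ) < 8 * b + 8 * a - 3 * a ^ 2 + t)]
    · have ht2 : t = 0 := Real.sqrt_eq_zero_of_nonpos (by linarith [not_le.mp hc])
      nlinarith [sq_nonneg (8 * b + 8 * a - 3 * a ^ 2), not_le.mp hc]
  have hu : 0 < 4 * a + 4 * b - a ^ 2 := by nlinarith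
  have hkey : a * β < 2 * a + 2 * b := by
    rw [hβ]
    have e : (a * s) ^ 2 = a ^ 2 * (a ^ 2 + 4 * b) := by rw [mul_pow, hs2]
    have h1 : (a * s) ^ 2 < (4 * a + 4 * b - a ^ 2) ^ 2 := by nlinarith [hQ]
    have h2 : a * s < 4 * a + 4 * b - a ^ 2 := lt_of_pow_lt_pow_left₀ 2 hu.le h1
    linarith
  have hβ0 : (0:ℝ) < β := by linarith
  have hE : ((b * (Yx * (1 - β)) - Yy) / β + (1 + 0 - a * (Yx * (1 - β))) - Yx)
      = (2 * a + 2 * b - a * β) / (a + b - 1) := by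
    rw [hYx, hYy]
    field_simp
    ring
  have hgoal : (lozi a b (Yx * (1 - β), 0)).2 = b * (Yx * (1 - β)) := rfl
  have hgoal1 : (lozi a b (Yx * (1 - β), 0)).1 = 1 + 0 - a * |Yx * (1 - β)| := rfl
  rw [gt_iff_lt, hgoal, hgoal1, abs_of_pos hA, hE]
  exact div_pos (by linarith) hd
end

section
/- Assume 1 < a ≤ 2, -1 < b < 0, a + b > 1, and let α = (a-√(a²+4b))/2, β = (a+√(a²+4b))/2. If |r| ≤ α|t| and (t̄, r̄) = (σa·t + r, b·t) for σ ∈ {-1,1}, then |r̄| ≤ α|t̄|, |r̄| ≥ β|r| and |t̄| ≥ β|t|. -/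
/-- Unstable-cone invariance: if |r| ≤ α|t| and (t̄, r̄) = (σa·t + r, b·t), then
|r̄| ≤ α|t̄|, |r̄| ≥ β|r| and |t̄| ≥ β|t|. -/
theorem unstable_cone_invariance (a b : ℝ) (ha1 : 1 < a) (ha2 : a ≤ 2)
    (hb1 : -1 < b) (hb2 : b < 0) (hab : 1 < a + b)
    (σ t r tb rb α β : ℝ) (hσ : σ = -1 ∨ σ = 1)
    (hα : α = (a - Real.sqrt (a ^ 2 + 4 * b)) / 2)
    (hβ : β = (a + Real.sqrt (a ^ 2 + 4 * b)) / 2)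
    (hcone : |r| ≤ α * |t|)
    (htb : tb = σ * a * t + r) (hrb : rb = b * t) :
    |rb| ≤ α * |tb| ∧ |rb| ≥ β * |r| ∧ |tb| ≥ β * |t| := by
  have hd : (0:ℝ) ≤ a ^ 2 + 4 * b := by nlinarith
  have hs : Real.sqrt (a ^ 2 + 4 * b) ^ 2 = a ^ 2 + 4 * b := Real.sq_sqrt hd
  have hsnn : 0 ≤ Real.sqrt (a ^ 2 + 4 * b) := Real.sqrt_nonneg _
  have hαβ : α * β = -b := by rw [hα, hβ]; nlinarith [hs]
  have hsum : α + β = a := by rw [hα, hβ]; ring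
  have hαpos : 0 < α := by
    have hlt : Real.sqrt (a ^ 2 + 4 * b) < a := by nlinarith
    rw [hα]; linarith
  have hβpos : 0 < β := by rw [hβ]; linarith
  have hat : |σ * a * t| = a * |t| := by
    rcases hσ with h | h <;> subst h <;>
      simp [abs_mul, abs_of_pos (show (0:ℝ) < a by linarith)]
  have h1 : a * |t| ≤ |tb| + |r| := by
    have h2 : |tb - r| ≤ |tb| + |r| := abs_sub _ _
    have h3 : tb - r = σ * a * t := by rw [htb]; ring
    rw [h3, hat] at h2
    exact h2
  have htnn : 0 ≤ |t| := abs_nonneg t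
  have hmain : β * |t| ≤ |tb| := by nlinarith
  have hrb' : |rb| = α * β * |t| := by
    rw [hrb, abs_mul, abs_of_neg hb2, ← hαβ]
  refine ⟨?_, ?_, hmain⟩
  · rw [hrb']; nlinarith
  · rw [hrb']; nlinarith
end

section
/- Let q ∈ ℝ² be such that the Lozi map f (with 1 < a ≤ 2, -1 < b < 0, a+b > 1) is differentiable at all points fⁿ(q), n ≥ 0. Then there exists a one-dimensional subspace E^s_q of ℝ² such that ‖Dfⁿ(v)‖ ≤ αⁿ‖v‖ for all v ∈ E^s_q and all n ≥ 0, and Df_q(E^s_q) = E^s_{f(q)}, where α = (a-√(a²+4b))/2 < 1. -/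
open Set Filter Topology Metric Finset
open scoped NNReal

section BackwardOrbit

variable {X : Type*} {S : Set X} {g : ℕ → X → X}

/-- `backwardIter g x₀ k n = g n (g (n + 1) (⋯ (g (n + k - 1) x₀)))`. -/
def backwardIter (g : ℕ → X → X) (x₀ : X) : ℕ → ℕ → X
  | 0, _ => x₀
  | k + 1, n => g n (backwardIter g x₀ k (n + 1))

theorem backwardIter_mem (hg : ∀ n, MapsTo (g n) S S) {x₀ : X} (hx₀ : x₀ ∈ S) :
    ∀ k n, backwardIter g x₀ k n ∈ S
  | 0, _ => hx₀
  | k + 1, n => hg n (backwardIter_mem hg hx₀ k (n + 1))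

theorem dist_backwardIter_succ_le [MetricSpace X] {K : ℝ≥0} (hS : Bornology.IsBounded S)
    (hg : ∀ n, MapsTo (g n) S S) (hlip : ∀ n, LipschitzOnWith K (g n) S) {x₀ : X} (hx₀ : x₀ ∈ S) :
    ∀ k n, dist (backwardIter g x₀ k n) (backwardIter g x₀ (k + 1) n) ≤ diam S * K ^ k
  | 0, n => by simpa [backwardIter] using dist_le_diam_of_mem hS hx₀ (hg n hx₀)
  | k + 1, n =>
    calc dist (backwardIter g x₀ (k + 1) n) (backwardIter g x₀ (k + 2) n)
        ≤ K * dist (backwardIter g x₀ k (n + 1)) (backwardIter g x₀ (k + 1) (n + 1)) :=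
          (hlip n).dist_le_mul _ (backwardIter_mem hg hx₀ k (n + 1)) _
            (backwardIter_mem hg hx₀ (k + 1) (n + 1))
      _ ≤ K * (diam S * K ^ k) := by
          gcongr; exact dist_backwardIter_succ_le hS hg hlip hx₀ k (n + 1)
      _ = diam S * K ^ (k + 1) := by ring

theorem exists_backward_orbit [MetricSpace X] [CompleteSpace X] {K : ℝ≥0} (hSc : IsClosed S)
    (hSb : Bornology.IsBounded S) (hSn : S.Nonempty) (hg : ∀ n, MapsTo (g n) S S)
    (hlip : ∀ n, LipschitzOnWith K (g n) S) (hK : K < 1) :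
    ∃ m : ℕ → X, (∀ n, m n ∈ S) ∧ ∀ n, m n = g n (m (n + 1)) := by
  obtain ⟨x₀, hx₀⟩ := hSn
  have hlim : ∀ n, ∃ y, Tendsto (fun k => backwardIter g x₀ k n) atTop (𝓝 y) := fun n =>
    cauchySeq_tendsto_of_complete <| cauchySeq_of_le_geometric (K : ℝ) (diam S)
      (by exact_mod_cast hK) (fun k => dist_backwardIter_succ_le hSb hg hlip hx₀ k n)
  choose m hm using hlim
  have hmS : ∀ n, m n ∈ S := fun n =>
    hSc.mem_of_tendsto (hm n) (Eventually.of_forall fun k => backwardIter_mem hg hx₀ k n)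
  refine ⟨m, hmS, fun n => tendsto_nhds_unique ((hm n).comp (tendsto_add_atTop_nat 1)) ?_⟩
  have hwithin : Tendsto (fun k => backwardIter g x₀ k (n + 1)) atTop (𝓝[S] m (n + 1)) :=
    tendsto_nhdsWithin_iff.2
      ⟨hm (n + 1), Eventually.of_forall fun k => backwardIter_mem hg hx₀ k (n + 1)⟩
  exact ((hlip n).continuousOn (m (n + 1)) (hmS (n + 1))).tendsto.comp hwithin

end BackwardOrbit

section Derivative

variable {𝕜 E : Type*} [NontriviallyNormedField 𝕜] [NormedAddCommGroup E] [NormedSpace 𝕜 E]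

theorem fderiv_iterate_apply_eq_prod_smul {f : E → E} {q : E} {L : ℕ → E →L[𝕜] E}
    (hL : ∀ n, HasFDerivAt f (L n) (f^[n] q)) {w : ℕ → E} {c : ℕ → 𝕜}
    (hw : ∀ n, L n (w n) = c n • w (n + 1)) (n : ℕ) :
    fderiv 𝕜 f^[n] q (w 0) = (∏ i ∈ range n, c i) • w n := by
  suffices ∀ n, ∃ D : E →L[𝕜] E, HasFDerivAt f^[n] D q ∧ D (w 0) = (∏ i ∈ range n, c i) • w n by
    obtain ⟨D, hD, hDw⟩ := this n
    rw [hD.fderiv, hDw]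
  intro n
  induction n with
  | zero => exact ⟨ContinuousLinearMap.id 𝕜 E, hasFDerivAt_id q, by simp⟩
  | succ n ih =>
    obtain ⟨D, hD, hDw⟩ := ih
    refine ⟨(L n).comp D, ?_, ?_⟩
    · rw [Function.iterate_succ']
      exact (hL n).comp q hD
    · rw [ContinuousLinearMap.comp_apply, hDw, map_smul, hw, smul_smul, prod_range_succ]

end Derivative

/-- The derivative of `lozi a b` at a point whose first coordinate has sign `s`. -/
noncomputable def loziLinear (a b s : ℝ) : (ℝ × ℝ) →L[ℝ] (ℝ × ℝ) :=
  ((-(s * a)) • ContinuousLinearMap.fst ℝ ℝ ℝ + ContinuousLinearMap.snd ℝ ℝ ℝ).prod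
    (b • ContinuousLinearMap.fst ℝ ℝ ℝ)

theorem loziLinear_apply (a b s : ℝ) (v : ℝ × ℝ) :
    loziLinear a b s v = (-(s * a) * v.1 + v.2, b * v.1) := rfl

theorem hasFDerivAt_lozi (a b : ℝ) {p : ℝ × ℝ} (hp : p.1 ≠ 0) :
    HasFDerivAt (lozi a b) (loziLinear a b (Real.sign p.1)) p := by
  have hloc : ∀ᶠ y in 𝓝 p, |y.1| = Real.sign p.1 * y.1 := by
    rcases hp.lt_or_gt with h | h
    · filter_upwards [(continuous_fst.tendsto p).eventually (gt_mem_nhds h)] with y hy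
      rw [Real.sign_of_neg h, abs_of_neg hy]
      ring
    · filter_upwards [(continuous_fst.tendsto p).eventually (lt_mem_nhds h)] with y hy
      rw [Real.sign_of_pos h, abs_of_pos hy, one_mul]
  refine ((loziLinear a b (Real.sign p.1)).hasFDerivAt.const_add (1, 0)).congr_of_eventuallyEq ?_
  filter_upwards [hloc] with y hy
  simp only [lozi, loziLinear_apply, hy, Prod.mk_add_mk, Prod.mk.injEq]
  constructor <;> ring

theorem fst_ne_zero_of_differentiableAt_lozi {a b : ℝ} (ha : a ≠ 0) {p : ℝ × ℝ}
    (h : DifferentiableAt ℝ (lozi a b) p) : p.1 ≠ 0 := by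
  intro h0
  have hcurve : DifferentiableAt ℝ (fun t : ℝ => (t, p.2)) p.1 :=
    differentiableAt_id.prodMk (differentiableAt_const p.2)
  have hline : DifferentiableAt ℝ (fun t : ℝ => (lozi a b (t, p.2)).1) p.1 :=
    ((show DifferentiableAt ℝ (lozi a b) (p.1, p.2) from h).comp p.1 hcurve).fst
  have habs : DifferentiableAt ℝ (fun t : ℝ => |t|) p.1 := by
    have hsolve : (fun t : ℝ => |t|) = fun t => a⁻¹ * (1 + p.2 - (lozi a b (t, p.2)).1) := by
      funext t
      simp only [lozi]
      field_simp
      ring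
    rw [hsolve]
    exact ((differentiableAt_const (1 + p.2)).sub hline).const_mul a⁻¹
  exact not_differentiableAt_abs_zero (h0 ▸ habs)

/-- `Df⁻¹` maps the direction `(m, 1)` to the direction `(loziSlope a b s m, 1)`. -/
noncomputable def loziSlope (a b s m : ℝ) : ℝ := (b * m + s * a)⁻¹

section Cone

variable {a b α β : ℝ}

theorem abs_mul_le_of_abs_le_inv (hprod : α * β = -b) (hα : 0 ≤ α) (hβ : 0 < β) {m : ℝ}
    (hm : |m| ≤ β⁻¹) : |b * m| ≤ α :=
  calc |b * m| = α * β * |m| := by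
        rw [abs_mul, ← abs_neg b, ← hprod, abs_of_nonneg (by positivity)]
    _ ≤ α * β * β⁻¹ := by gcongr
    _ = α := by field_simp

theorem le_abs_loziSlope_denom (hsum : α + β = a) (hprod : α * β = -b) (hα : 0 ≤ α)
    (hβ : 0 < β) {s m : ℝ} (hs : |s| = 1) (hm : |m| ≤ β⁻¹) : β ≤ |b * m + s * a| := by
  have hsa : |s * a| = α + β := by rw [abs_mul, hs, one_mul, ← hsum, abs_of_pos (by linarith)]
  have hbm := abs_mul_le_of_abs_le_inv hprod hα hβ hm
  have htri := abs_sub_abs_le_abs_add (s * a) (b * m)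
  rw [add_comm (b * m)]
  linarith

theorem mapsTo_loziSlope (hsum : α + β = a) (hprod : α * β = -b) (hα : 0 ≤ α) (hβ : 0 < β)
    {s : ℝ} (hs : |s| = 1) :
    MapsTo (loziSlope a b s) (closedBall 0 β⁻¹) (closedBall 0 β⁻¹) := by
  intro m hm
  rw [mem_closedBall_zero_iff, Real.norm_eq_abs] at hm ⊢
  rw [loziSlope, abs_inv]
  exact inv_anti₀ hβ (le_abs_loziSlope_denom hsum hprod hα hβ hs hm)

theorem lipschitzOnWith_loziSlope (hsum : α + β = a) (hprod : α * β = -b) (hα : 0 ≤ α)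
    (hβ : 0 < β) {s : ℝ} (hs : |s| = 1) :
    LipschitzOnWith (α / β).toNNReal (loziSlope a b s) (closedBall 0 β⁻¹) := by
  refine LipschitzOnWith.of_dist_le' fun u hu w hw => ?_
  rw [mem_closedBall_zero_iff, Real.norm_eq_abs] at hu hw
  have hdu := le_abs_loziSlope_denom hsum hprod hα hβ hs hu
  have hdw := le_abs_loziSlope_denom hsum hprod hα hβ hs hw
  have hdu0 : b * u + s * a ≠ 0 := abs_pos.1 (hβ.trans_le hdu)
  have hdw0 : b * w + s * a ≠ 0 := abs_pos.1 (hβ.trans_le hdw)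
  have hdiff : loziSlope a b s u - loziSlope a b s w
      = -b * (u - w) / ((b * u + s * a) * (b * w + s * a)) := by
    rw [loziSlope, loziSlope]
    field_simp
    ring
  rw [Real.dist_eq, Real.dist_eq, hdiff, abs_div, abs_mul, abs_mul, ← hprod,
    abs_of_nonneg (by positivity)]
  calc α * β * |u - w| / (|b * u + s * a| * |b * w + s * a|)
      ≤ α * β * |u - w| / (β * β) := by gcongr
    _ = α / β * |u - w| := by field_simp

theorem exists_lozi_stable_slopes (hsum : α + β = a) (hprod : α * β = -b) (hα : 0 ≤ α)
    (hαβ : α < β) (s : ℕ → ℝ) (hs : ∀ n, |s n| = 1) :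
    ∃ m : ℕ → ℝ, (∀ n, |m n| ≤ β⁻¹) ∧ ∀ n, m n * (b * m (n + 1) + s n * a) = 1 := by
  have hβ : 0 < β := hα.trans_lt hαβ
  obtain ⟨m, hmS, hm⟩ := exists_backward_orbit isClosed_closedBall isBounded_closedBall
    (nonempty_closedBall.2 (inv_nonneg.2 hβ.le))
    (fun n => mapsTo_loziSlope hsum hprod hα hβ (hs n))
    (fun n => lipschitzOnWith_loziSlope hsum hprod hα hβ (hs n))
    (Real.toNNReal_lt_one.2 ((div_lt_one hβ).2 hαβ))
  have hm_le : ∀ n, |m n| ≤ β⁻¹ := fun n => by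
    simpa only [mem_closedBall_zero_iff, Real.norm_eq_abs] using hmS n
  refine ⟨m, hm_le, fun n => ?_⟩
  have hden := le_abs_loziSlope_denom hsum hprod hα hβ (hs n) (hm_le (n + 1))
  rw [hm n, loziSlope]
  exact inv_mul_cancel₀ (abs_pos.1 (hβ.trans_le hden))

end Cone

theorem loziLinear_apply_slope {a b s m m' : ℝ} (h : m * (b * m' + s * a) = 1) :
    loziLinear a b s (m, 1) = (b * m) • (m', 1) := by
  rw [loziLinear_apply, Prod.smul_mk, smul_eq_mul, smul_eq_mul, Prod.mk.injEq]
  exact ⟨by linear_combination -h, by ring⟩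

theorem exists_lozi_stable_direction {a b α β : ℝ} (hsum : α + β = a) (hprod : α * β = -b)
    (hα : 0 < α) (hαβ : α < β) (hβ : 1 ≤ β) (q : ℝ × ℝ)
    (hdiff : ∀ n : ℕ, DifferentiableAt ℝ (lozi a b) ((lozi a b)^[n] q)) :
    ∃ E : ℕ → Submodule ℝ (ℝ × ℝ),
      (∀ n, Module.finrank ℝ (E n) = 1) ∧
      (∀ n, Submodule.map
          (fderiv ℝ (lozi a b) ((lozi a b)^[n] q)).toLinearMap (E n) = E (n + 1)) ∧
      (∀ v ∈ E 0, ∀ n : ℕ, ‖fderiv ℝ ((lozi a b)^[n]) q v‖ ≤ α ^ n * ‖v‖) := by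
  have hβ0 : 0 < β := hα.trans hαβ
  set s : ℕ → ℝ := fun n => Real.sign ((lozi a b)^[n] q).1
  have hx : ∀ n, ((lozi a b)^[n] q).1 ≠ 0 := fun n =>
    fst_ne_zero_of_differentiableAt_lozi (by linarith) (hdiff n)
  have hs : ∀ n, |s n| = 1 := fun n => by
    rcases Real.sign_apply_eq_of_ne_zero _ (hx n) with h | h <;> simp [s, h]
  obtain ⟨m, hm_le, hm⟩ := exists_lozi_stable_slopes hsum hprod hα.le hαβ s hs
  set w : ℕ → ℝ × ℝ := fun n => (m n, 1)
  have hL : ∀ n, HasFDerivAt (lozi a b) (loziLinear a b (s n)) ((lozi a b)^[n] q) := fun n =>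
    hasFDerivAt_lozi a b (hx n)
  have hw : ∀ n, loziLinear a b (s n) (w n) = (b * m n) • w (n + 1) := fun n =>
    loziLinear_apply_slope (hm n)
  have hw_norm : ∀ n, ‖w n‖ = 1 := fun n => by
    rw [Prod.norm_def, norm_one, Real.norm_eq_abs]
    exact max_eq_right ((hm_le n).trans (inv_le_one_of_one_le₀ hβ))
  have hc_ne : ∀ n, b * m n ≠ 0 := fun n =>
    mul_ne_zero (by nlinarith) (left_ne_zero_of_mul_eq_one (hm n))
  refine ⟨fun n => Submodule.span ℝ {w n}, fun n => finrank_span_singleton (by simp [w]),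
    fun n => ?_, fun v hv n => ?_⟩
  · rw [(hL n).fderiv, Submodule.map_span, image_singleton, ContinuousLinearMap.coe_coe, hw n,
      Submodule.span_singleton_smul_eq (isUnit_iff_ne_zero.2 (hc_ne n))]
  · obtain ⟨t, rfl⟩ := Submodule.mem_span_singleton.1 hv
    have hprod_le : ‖∏ i ∈ range n, b * m i‖ ≤ α ^ n := by
      rw [norm_prod]
      refine (prod_le_prod (fun i _ => norm_nonneg _) fun i _ => ?_).trans_eq
        (pow_eq_prod_const α n).symm
      exact abs_mul_le_of_abs_le_inv hprod hα.le hβ0 (hm_le i)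
    rw [map_smul, fderiv_iterate_apply_eq_prod_smul hL hw, norm_smul, norm_smul, norm_smul,
      hw_norm, hw_norm, mul_one, mul_one, mul_comm]
    gcongr

theorem stable_direction_exists_general (a b : ℝ)
    (hb2 : b < 0) (hab : 1 < a + b)
    (q : ℝ × ℝ)
    (hdiff : ∀ n : ℕ, DifferentiableAt ℝ (lozi a b) ((lozi a b)^[n] q)) :
    ∃ E : ℕ → Submodule ℝ (ℝ × ℝ),
      (∀ n, Module.finrank ℝ (E n) = 1) ∧
      (∀ n, Submodule.map
          (fderiv ℝ (lozi a b) ((lozi a b)^[n] q)).toLinearMap (E n) = E (n + 1)) ∧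
      (∀ v ∈ E 0, ∀ n : ℕ,
        ‖fderiv ℝ ((lozi a b)^[n]) q v‖ ≤
          ((a - Real.sqrt (a ^ 2 + 4 * b)) / 2) ^ n * ‖v‖) := by
  have hdisc : 0 < a ^ 2 + 4 * b := by nlinarith [sq_nonneg (a - 2)]
  set r := Real.sqrt (a ^ 2 + 4 * b)
  have hr : 0 < r := Real.sqrt_pos.2 hdisc
  have hr2 : r ^ 2 = a ^ 2 + 4 * b := Real.sq_sqrt hdisc.le
  exact exists_lozi_stable_direction (β := (a + r) / 2) (by ring)
    (by linear_combination -hr2 / 4) (by nlinarith) (by linarith) (by nlinarith) q hdiff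

/-- Existence of stable directions: if f is differentiable along the forward
orbit of q, there are one-dimensional subspaces E^s at the orbit points such
that Dfⁿ contracts vectors of E^s_q by αⁿ and Df maps E^s_{fⁿ(q)} to
E^s_{fⁿ⁺¹(q)}. -/
theorem stable_direction_exists (a b : ℝ) (ha1 : 1 < a) (ha2 : a ≤ 2)
    (hb1 : -1 < b) (hb2 : b < 0) (hab : 1 < a + b)
    (q : ℝ × ℝ)
    (hdiff : ∀ n : ℕ, DifferentiableAt ℝ (lozi a b) ((lozi a b)^[n] q)) :
    ∃ E : ℕ → Submodule ℝ (ℝ × ℝ),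
      (∀ n, Module.finrank ℝ (E n) = 1) ∧
      (∀ n, Submodule.map
          (fderiv ℝ (lozi a b) ((lozi a b)^[n] q)).toLinearMap (E n) = E (n + 1)) ∧
      (∀ v ∈ E 0, ∀ n : ℕ,
        ‖fderiv ℝ ((lozi a b)^[n]) q v‖ ≤
          ((a - Real.sqrt (a ^ 2 + 4 * b)) / 2) ^ n * ‖v‖) :=
  stable_direction_exists_general a b hb2 hab q hdiff
end

section
/- Assume condition C3: 1 < a < 2 and max{1-a, (1-2a)/4, (3a²-8a+√(9a⁴-16a³))/8} < b < 0. Let K = {(x,y) : y - Y_y + β(x - Y_x) ≥ 0} where Y = (-1/(a+b-1), -b/(a+b-1)) and β = (a+√(a²+4b))/2. Then f⁻¹(K) ⊆ K. -/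
/-- Under condition (C3), the region K to the right of the stable line of Y
satisfies f⁻¹(K) ⊆ K. -/
theorem preimage_K_subset_K (a b : ℝ) (ha1 : 1 < a) (ha2 : a < 2)
    (hb : max (max (1 - a) ((1 - 2 * a) / 4))
      ((3 * a ^ 2 - 8 * a + Real.sqrt (9 * a ^ 4 - 16 * a ^ 3)) / 8) < b)
    (hb0 : b < 0)
    (β Yx Yy : ℝ)
    (hβ : β = (a + Real.sqrt (a ^ 2 + 4 * b)) / 2)
    (hYx : Yx = -1 / (a + b - 1)) (hYy : Yy = -b / (a + b - 1)) :
    lozi a b ⁻¹' {p : ℝ × ℝ | p.2 - Yy + β * (p.1 - Yx) ≥ 0} ⊆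
      {p : ℝ × ℝ | p.2 - Yy + β * (p.1 - Yx) ≥ 0} := by
  have hb1 : (1 - 2 * a) / 4 < b := lt_of_le_of_lt (le_max_right _ _)
    (lt_of_le_of_lt (le_max_left _ _) hb)
  have hb2 : 1 - a < b := lt_of_le_of_lt (le_max_left _ _)
    (lt_of_le_of_lt (le_max_left _ _) hb)
  have hd : (0:ℝ) ≤ a ^ 2 + 4 * b := by nlinarith
  set s := Real.sqrt (a ^ 2 + 4 * b) with hs
  have hs0 : 0 ≤ s := Real.sqrt_nonneg _
  have hs2 : s ^ 2 = a ^ 2 + 4 * b := Real.sq_sqrt hd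
  have hβpos : 0 < β := by rw [hβ]; positivity
  have hβ2 : β ^ 2 = a * β + b := by rw [hβ]; nlinarith
  have habd : a + b - 1 > 0 := by linarith
  have hYx' : Yx * (a + b - 1) = -1 := by
    rw [hYx]; field_simp
  have hYy' : Yy * (a + b - 1) = -b := by
    rw [hYy]; field_simp
  intro p hp
  simp only [Set.mem_preimage, Set.mem_setOf_eq, lozi] at hp ⊢
  have habs : -p.1 ≤ |p.1| := neg_le_abs _
  have hYyb : Yy = b * Yx := by
    have h := habd.ne'
    rw [hYx, hYy]; field_simp
  have hfix : 1 + Yy + a * Yx = Yx := by nlinarith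
  have hYxneg : Yx < 0 := by nlinarith
  have hsum : 0 ≤ p.1 + |p.1| := by linarith
  have h1 : 0 ≤ a * β * (p.1 + |p.1|) := by positivity
  have h2 : 0 < β * (-Yx) := mul_pos hβpos (by linarith)
  have hid : β * (p.2 - Yy + β * (p.1 - Yx)) =
      (b * p.1 - Yy + β * (1 + p.2 - a * |p.1| - Yx)) + a * β * (p.1 + |p.1|) := by
    linear_combination (p.1 - Yx) * hβ2 - β * hfix + hYyb
  have key : 0 ≤ β * (p.2 - Yy + β * (p.1 - Yx)) := by rw [hid]; linarith
  exact nonneg_of_mul_nonneg_right key hβpos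
end

section
/- Let G ⊂ ℝ² be a compact set with f(G) ⊆ G, where f is the Lozi map with parameters satisfying √2 < a < 2 and max{(3a²-8a+√(9a⁴-16a³))/8, 2-√2·a} < b < 0 (condition C6). Let I ⊆ G be a segment contained in an unstable manifold (so the length of fⁿ(I) is at least βⁿ·length(I) with β = (a+√(a²+4b))/2 > √2). Then there exist n ≥ 0 and a segment I₁ ⊆ fⁿ(I) such that I₁ intersects both coordinate axes. -/
/-!
Suppose no segment in any iterate `fⁿ(I)` meets both axes. The Lozi map `f` is affine on each
closed half-plane `±x ≥ 0`, so it maps a segment to a segment, or to two segments if the segment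
crosses the vertical axis at some `c`. In that case both pieces pass through `f c`, which lies on
the horizontal axis, so by assumption neither piece meets the vertical axis and `f` maps each to a
single segment. Hence `f²` at most doubles the number of segments, and `f^{2k}(I) ⊆ G` is a union
of at most `2^k` segments, of total length at most `2^k diam G`. This contradicts the growth
`β^{2k} |I|` of the length, because `β² > 2`.
-/

open MeasureTheory

open Set

theorem segment_eq_union_segment {𝕜 E : Type*} [Field 𝕜] [LinearOrder 𝕜] [IsStrictOrderedRing 𝕜]
    [AddCommGroup E] [Module 𝕜 E] {u v c : E} (hc : c ∈ segment 𝕜 u v) :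
    segment 𝕜 u v = segment 𝕜 u c ∪ segment 𝕜 c v := by
  rw [segment_eq_image_lineMap] at hc
  obtain ⟨t, ht, rfl⟩ := hc
  set L := AffineMap.lineMap (k := 𝕜) u v
  calc segment 𝕜 u v = L '' segment 𝕜 0 1 := by
        rw [image_segment, AffineMap.lineMap_apply_zero, AffineMap.lineMap_apply_one]
    _ = L '' (segment 𝕜 0 t ∪ segment 𝕜 t 1) := by
        rw [segment_eq_Icc ht.1, segment_eq_Icc ht.2, segment_eq_Icc zero_le_one,
          Icc_union_Icc_eq_Icc ht.1 ht.2]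
    _ = _ := by
        rw [image_union, image_segment, image_segment, AffineMap.lineMap_apply_zero,
          AffineMap.lineMap_apply_one]

section UnionOfSegments

variable {E : Type*} [AddCommGroup E] [Module ℝ E]

def IsUnionOfSegments (S : Set E) (N : ℕ) : Prop :=
  ∃ s : Finset (E × E), s.card ≤ N ∧ S = ⋃ x ∈ s, segment ℝ x.1 x.2

theorem isUnionOfSegments_segment (u v : E) : IsUnionOfSegments (segment ℝ u v) 1 :=
  ⟨{(u, v)}, by simp, by simp⟩

namespace IsUnionOfSegments

variable {S T : Set E} {m n : ℕ}

theorem mono (hS : IsUnionOfSegments S m) (h : m ≤ n) : IsUnionOfSegments S n := by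
  obtain ⟨s, hs, rfl⟩ := hS
  exact ⟨s, hs.trans h, rfl⟩

theorem union (hS : IsUnionOfSegments S m) (hT : IsUnionOfSegments T n) :
    IsUnionOfSegments (S ∪ T) (m + n) := by
  classical
  obtain ⟨s, hs, rfl⟩ := hS
  obtain ⟨t, ht, rfl⟩ := hT
  exact ⟨s ∪ t, (Finset.card_union_le s t).trans (add_le_add hs ht),
    (Finset.set_biUnion_union s t _).symm⟩

theorem image {F : Type*} [AddCommGroup F] [Module ℝ F] {g : E → F}
    (hS : IsUnionOfSegments S n)
    (hg : ∀ u v, segment ℝ u v ⊆ S → IsUnionOfSegments (g '' segment ℝ u v) m) :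
    IsUnionOfSegments (g '' S) (m * n) := by
  classical
  obtain ⟨s, hs, rfl⟩ := hS
  choose! t ht hgt using fun x (hx : x ∈ s) => hg x.1 x.2
    (Finset.subset_set_biUnion_of_mem (f := fun y : E × E => segment ℝ y.1 y.2) hx)
  refine ⟨s.biUnion t, ?_, ?_⟩
  · calc (s.biUnion t).card ≤ ∑ x ∈ s, (t x).card := Finset.card_biUnion_le
      _ ≤ s.card * m := Finset.sum_le_card_nsmul _ _ _ ht
      _ ≤ m * n := by rw [mul_comm]; exact Nat.mul_le_mul_left m hs
  · rw [image_iUnion₂, Finset.set_biUnion_biUnion]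
    exact iUnion₂_congr hgt

end IsUnionOfSegments

end UnionOfSegments

theorem IsUnionOfSegments.hausdorffMeasure_le {E : Type*} [NormedAddCommGroup E]
    [NormedSpace ℝ E] [MeasurableSpace E] [BorelSpace E] {S G : Set E} {N : ℕ}
    (hS : IsUnionOfSegments S N) (hG : Bornology.IsBounded G) (hSG : S ⊆ G) :
    μH[1] S ≤ ENNReal.ofReal (N * Metric.diam G) := by
  obtain ⟨s, hs, rfl⟩ := hS
  have hseg : ∀ x ∈ s, μH[1] (segment ℝ x.1 x.2) ≤ ENNReal.ofReal (Metric.diam G) := by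
    intro x hx
    have hxG := (Finset.subset_set_biUnion_of_mem hx).trans hSG
    rw [hausdorffMeasure_segment, edist_dist]
    exact ENNReal.ofReal_le_ofReal (Metric.dist_le_diam_of_mem hG
      (hxG (left_mem_segment ℝ _ _)) (hxG (right_mem_segment ℝ _ _)))
  calc μH[1] (⋃ x ∈ s, segment ℝ x.1 x.2) ≤ ∑ x ∈ s, μH[1] (segment ℝ x.1 x.2) :=
        measure_biUnion_finset_le s _
    _ ≤ s.card * ENNReal.ofReal (Metric.diam G) := by
        simpa using Finset.sum_le_sum hseg
    _ ≤ N * ENNReal.ofReal (Metric.diam G) := by gcongr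
    _ = ENNReal.ofReal (N * Metric.diam G) := by
        rw [ENNReal.ofReal_mul (Nat.cast_nonneg _), ENNReal.ofReal_natCast]

theorem exists_mem_segment_fst_eq_zero {u v : ℝ × ℝ} (h : u.1 * v.1 ≤ 0) :
    ∃ c ∈ segment ℝ u v, c.1 = 0 := by
  have h0 : (0 : ℝ) ∈ segment ℝ u.1 v.1 := by
    rw [segment_eq_uIcc, mem_uIcc]
    rcases mul_nonpos_iff.1 h with ⟨hu, hv⟩ | ⟨hu, hv⟩
    · exact Or.inr ⟨hv, hu⟩
    · exact Or.inl ⟨hu, hv⟩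
  obtain ⟨α, β, hα, hβ, hαβ, h0⟩ := h0
  exact ⟨α • u + β • v, ⟨α, β, hα, hβ, hαβ, rfl⟩, h0⟩

theorem image_segment_of_eqOn {E F : Type*} [AddCommGroup E] [Module ℝ E] [AddCommGroup F]
    [Module ℝ F] {f : E → F} (g : E →ᵃ[ℝ] F) {u v : E} (h : EqOn f g (segment ℝ u v)) :
    f '' segment ℝ u v = segment ℝ (f u) (f v) := by
  rw [h.image_eq, image_segment, h (left_mem_segment ℝ u v), h (right_mem_segment ℝ u v)]

/-- `(x, y) ↦ (1 + y - s x, b x)`: with `s = ±a` this is `lozi a b` on the half-plane `±x ≥ 0`. -/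
noncomputable def loziBranch (s b : ℝ) : ℝ × ℝ →ᵃ[ℝ] ℝ × ℝ :=
  ((LinearMap.snd ℝ ℝ ℝ - s • LinearMap.fst ℝ ℝ ℝ).prod (b • LinearMap.fst ℝ ℝ ℝ)).toAffineMap +
    AffineMap.const ℝ (ℝ × ℝ) (1, 0)

theorem lozi_image_segment_of_mul_nonneg {a b : ℝ} {u v : ℝ × ℝ} (h : 0 ≤ u.1 * v.1) :
    lozi a b '' segment ℝ u v = segment ℝ (lozi a b u) (lozi a b v) := by
  have hfst : ∀ z ∈ segment ℝ u v, z.1 ∈ segment ℝ u.1 v.1 := fun z hz =>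
    (Prod.segment_subset u v hz).1
  rcases mul_nonneg_iff.1 h with ⟨hu, hv⟩ | ⟨hu, hv⟩
  · refine image_segment_of_eqOn (loziBranch a b) fun z hz => ?_
    have hz1 : 0 ≤ z.1 := (convex_Ici 0).segment_subset hu hv (hfst z hz)
    ext <;> simp [lozi, loziBranch, abs_of_nonneg hz1]; ring
  · refine image_segment_of_eqOn (loziBranch (-a) b) fun z hz => ?_
    have hz1 : z.1 ≤ 0 := (convex_Iic 0).segment_subset hu hv (hfst z hz)
    ext <;> simp [lozi, loziBranch, abs_of_nonpos hz1]; ring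

theorem isUnionOfSegments_lozi_image_segment (a b : ℝ) (u v : ℝ × ℝ) :
    IsUnionOfSegments (lozi a b '' segment ℝ u v) 2 := by
  rcases le_total 0 (u.1 * v.1) with h | h
  · rw [lozi_image_segment_of_mul_nonneg h]
    exact (isUnionOfSegments_segment _ _).mono one_le_two
  · obtain ⟨c, hc, hc1⟩ := exists_mem_segment_fst_eq_zero h
    rw [segment_eq_union_segment hc, image_union,
      lozi_image_segment_of_mul_nonneg (by simp [hc1]),
      lozi_image_segment_of_mul_nonneg (by simp [hc1])]
    exact (isUnionOfSegments_segment _ _).union (isUnionOfSegments_segment _ _)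

theorem isUnionOfSegments_lozi_image_image_segment {a b : ℝ} {S : Set (ℝ × ℝ)} {u v : ℝ × ℝ}
    (hcross : ∀ x y, segment ℝ x y ⊆ lozi a b '' S →
      (∃ z ∈ segment ℝ x y, z.1 = 0) → ∀ w ∈ segment ℝ x y, w.2 ≠ 0)
    (huv : segment ℝ u v ⊆ S) :
    IsUnionOfSegments (lozi a b '' (lozi a b '' segment ℝ u v)) 2 := by
  rcases le_total 0 (u.1 * v.1) with h | h
  · rw [lozi_image_segment_of_mul_nonneg h]
    exact isUnionOfSegments_lozi_image_segment a b _ _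
  obtain ⟨c, hc, hc1⟩ := exists_mem_segment_fst_eq_zero h
  have hfc : (lozi a b c).2 = 0 := by simp [lozi, hc1]
  -- Both halves of the image of `[u, v]` pass through `lozi a b c` on the horizontal axis,
  -- so by `hcross` neither meets the vertical axis.
  have half : ∀ x, segment ℝ x c ⊆ segment ℝ u v →
      IsUnionOfSegments (lozi a b '' (lozi a b '' segment ℝ x c)) 1 := by
    intro x hx
    have himage := lozi_image_segment_of_mul_nonneg (a := a) (b := b) (u := x) (v := c)
      (by simp [hc1])
    have hsub : segment ℝ (lozi a b x) (lozi a b c) ⊆ lozi a b '' S :=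
      himage ▸ image_mono (hx.trans huv)
    have hsign : 0 ≤ (lozi a b x).1 * (lozi a b c).1 := by
      by_contra! hneg
      exact hcross _ _ hsub (exists_mem_segment_fst_eq_zero hneg.le) _
        (right_mem_segment ℝ _ _) hfc
    rw [himage, lozi_image_segment_of_mul_nonneg hsign]
    exact isUnionOfSegments_segment _ _
  rw [segment_eq_union_segment hc, segment_symm ℝ c v, image_union, image_union]
  exact (half u ((convex_segment u v).segment_subset (left_mem_segment ℝ u v) hc)).union
    (half v ((convex_segment u v).segment_subset (right_mem_segment ℝ u v) hc))

theorem isUnionOfSegments_lozi_iterate_two_mul_image {a b : ℝ} {I : Set (ℝ × ℝ)} {N : ℕ}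
    (hI : IsUnionOfSegments I N)
    (hcross : ∀ n x y, segment ℝ x y ⊆ (lozi a b)^[n] '' I →
      (∃ z ∈ segment ℝ x y, z.1 = 0) → ∀ w ∈ segment ℝ x y, w.2 ≠ 0) (k : ℕ) :
    IsUnionOfSegments ((lozi a b)^[2 * k] '' I) (2 ^ k * N) := by
  induction k with
  | zero => simpa using hI
  | succ k ih =>
    have hstep : ∀ n, (lozi a b)^[n + 1] '' I = lozi a b '' ((lozi a b)^[n] '' I) := fun n => by
      rw [Function.iterate_succ', image_comp]
    rw [mul_add, mul_one, hstep, hstep, ← image_comp, pow_succ', mul_assoc]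
    refine ih.image fun u v huv => ?_
    rw [image_comp]
    exact isUnionOfSegments_lozi_image_image_segment (hstep _ ▸ hcross _) huv

theorem two_lt_sq_half_add_sqrt {a b : ℝ} (hb : 2 - √2 * a < b) :
    2 < ((a + √(a ^ 2 + 4 * b)) / 2) ^ 2 := by
  have h2 : √2 ^ 2 = 2 := Real.sq_sqrt zero_le_two
  have hs : 2 * √2 - a < √(a ^ 2 + 4 * b) := Real.lt_sqrt_of_sq_lt (by nlinarith)
  calc 2 = √2 ^ 2 := h2.symm
    _ < ((a + √(a ^ 2 + 4 * b)) / 2) ^ 2 := by gcongr; linarith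

theorem exists_pow_mul_lt_pow_mul {s r c : ℝ} (hs : 0 < s) (hr : s < r) (hc : 0 < c) (D : ℝ) :
    ∃ k : ℕ, s ^ k * D < r ^ k * c := by
  obtain ⟨k, hk⟩ := pow_unbounded_of_one_lt (D / c) ((one_lt_div hs).2 hr)
  refine ⟨k, ?_⟩
  rw [div_pow, div_lt_div_iff₀ hc (pow_pos hs k)] at hk
  linarith

theorem unstable_segment_crosses_axes_general (a b : ℝ)
    (hb : max ((3 * a ^ 2 - 8 * a + Real.sqrt (9 * a ^ 4 - 16 * a ^ 3)) / 8)
      (2 - Real.sqrt 2 * a) < b)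
    (G : Set (ℝ × ℝ)) (hG : IsCompact G) (hfG : lozi a b '' G ⊆ G)
    (p q : ℝ × ℝ) (hpq : p ≠ q) (hIG : segment ℝ p q ⊆ G)
    (hgrow : ∀ n : ℕ,
      ENNReal.ofReal (((a + Real.sqrt (a ^ 2 + 4 * b)) / 2) ^ n) *
          μH[1] (segment ℝ p q) ≤
        μH[1] ((lozi a b)^[n] '' segment ℝ p q)) :
    ∃ (n : ℕ) (u v : ℝ × ℝ),
      segment ℝ u v ⊆ (lozi a b)^[n] '' segment ℝ p q ∧
      (∃ z ∈ segment ℝ u v, z.1 = 0) ∧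
      (∃ w ∈ segment ℝ u v, w.2 = 0) := by
  by_contra! hcross
  obtain ⟨k, hk⟩ := exists_pow_mul_lt_pow_mul two_pos
    (two_lt_sq_half_add_sqrt ((le_max_right _ _).trans_lt hb)) (dist_pos.2 hpq) (Metric.diam G)
  have hmaps : MapsTo (lozi a b)^[2 * k] G G := (mapsTo_iff_image_subset.2 hfG).iterate _
  have hlen : μH[1] ((lozi a b)^[2 * k] '' segment ℝ p q) ≤
      ENNReal.ofReal (2 ^ k * Metric.diam G) := by
    simpa using (isUnionOfSegments_lozi_iterate_two_mul_image
      (isUnionOfSegments_segment p q) hcross k).hausdorffMeasure_le hG.isBounded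
      ((image_mono hIG).trans hmaps.image_subset)
  have hgrow' := (hgrow (2 * k)).trans hlen
  rw [pow_mul, hausdorffMeasure_segment, edist_dist, ← ENNReal.ofReal_mul (by positivity),
    ENNReal.ofReal_le_ofReal_iff (mul_nonneg (by positivity) Metric.diam_nonneg)] at hgrow'
  exact hk.not_ge hgrow'

/-- Under condition (C6), any nondegenerate unstable segment I in a compact
forward-invariant set G has an iterate fⁿ(I) containing a segment meeting
both coordinate axes. The unstable-manifold property of I is expressed by
the growth of the 1-dimensional Hausdorff measure (length): the length of
fⁿ(I) is at least βⁿ times the length of I. -/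
theorem unstable_segment_crosses_axes (a b : ℝ)
    (ha1 : Real.sqrt 2 < a) (ha2 : a < 2)
    (hb : max ((3 * a ^ 2 - 8 * a + Real.sqrt (9 * a ^ 4 - 16 * a ^ 3)) / 8)
      (2 - Real.sqrt 2 * a) < b)
    (hb0 : b < 0)
    (G : Set (ℝ × ℝ)) (hG : IsCompact G) (hfG : lozi a b '' G ⊆ G)
    (p q : ℝ × ℝ) (hpq : p ≠ q) (hIG : segment ℝ p q ⊆ G)
    (hgrow : ∀ n : ℕ,
      ENNReal.ofReal (((a + Real.sqrt (a ^ 2 + 4 * b)) / 2) ^ n) *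
          μH[1] (segment ℝ p q) ≤
        μH[1] ((lozi a b)^[n] '' segment ℝ p q)) :
    ∃ (n : ℕ) (u v : ℝ × ℝ),
      segment ℝ u v ⊆ (lozi a b)^[n] '' segment ℝ p q ∧
      (∃ z ∈ segment ℝ u v, z.1 = 0) ∧
      (∃ w ∈ segment ℝ u v, w.2 = 0) :=
  unstable_segment_crosses_axes_general a b hb G hG hfG p q hpq hIG hgrow
end
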